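/- Let A ⊆ B be a non-degenerate inclusion of C*-algebras and M ⊆ B a slice. Let N ⊆ M be a norm-closed linear subspace with A·N ⊆ N and N·A ⊆ N (a subslice). Then N equals the closed linear span of {m (n* n') : m ∈ M, n, n' ∈ N}, and also equals the closed linear span of {(n n'*) m : m ∈ M, n, n' ∈ N}. In other words, writing s(N) for the closed linear span of N*N and r(N) for the closed linear span of NN* (both closed two-sided ideals of A), one has N = closure(M·s(N)) = closure(r(N)·M). -/

import Mathlib

/-!
Polarising the normaliser condition and using non-degeneracy gives `M* M ⊆ A` and `M M* ⊆ A`,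
so `m (n* n') = (m n*) n' ∈ A N ⊆ N` and `(n n'*) m = n (n'* m) ∈ N A ⊆ N`: both spans lie in `N`.
Conversely, every element `b` of a C*-algebra is a limit of `b f(b* b)` with `f t = t / (δ + t)`,
because `‖b - b f(b* b)‖² = ‖(b* b) (1 - f(b* b))²‖ ≤ δ`, and `f(b* b)` is a limit of polynomials
without constant term in `b* b`. For `n ∈ N` and `m ∈ M` the products `m p(n* n)` stay in the span
of the `m (n* n')` (that span lies in `M`, so one can induct on `p`), hence `n` lies in its closure.
The second identity is the mirror image under `b ↦ b*`.
-/

lemma mul_one_sub_div_add_sq_le {δ t : ℝ} (hδ : 0 < δ) (ht : 0 ≤ t) :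
    t * (1 - t / (δ + t)) ^ 2 ≤ δ := by
  have hpos : 0 < δ + t := by positivity
  rw [one_sub_div hpos.ne', add_sub_cancel_right, div_pow, mul_div_assoc',
    div_le_iff₀ (by positivity)]
  nlinarith [mul_nonneg ht hδ.le, sq_nonneg t, mul_nonneg (mul_nonneg ht hδ.le) ht]

section Polarization

variable {B S : Type*} [NonUnitalRing B] [StarRing B] [Module ℂ B] [StarModule ℂ B]
  [IsScalarTower ℂ B B] [SMulCommClass ℂ B B]
  [SetLike S B] [AddSubgroupClass S B] [SMulMemClass S ℂ B]

open Complex in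
lemma star_mul_mul_mem_of_forall_smul {A : S} {a x y : B}
    (h : ∀ c : ℂ, star (x + c • y) * a * (x + c • y) ∈ A) : star x * a * y ∈ A := by
  set q := fun c : ℂ => star (x + c • y) * a * (x + c • y)
  have hpol : star x * a * y = (4 : ℂ)⁻¹ • (q 1 - q (-1) - I • q I + I • q (-I)) := by
    simp only [q, star_add, star_smul, Complex.star_def, map_neg, map_one, conj_I, add_mul,
      mul_add, smul_mul_assoc, mul_smul_comm, smul_add, smul_smul]
    match_scalars <;> ring_nf <;> norm_num [I_sq]
  rw [hpol]
  exact SMulMemClass.smul_mem _ <|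
    add_mem (sub_mem (sub_mem (h 1) (h (-1))) (SMulMemClass.smul_mem _ (h I)))
      (SMulMemClass.smul_mem _ (h (-I)))

lemma mul_mul_star_mem_of_forall_smul {A : S} {a x y : B}
    (h : ∀ c : ℂ, (x + c • y) * a * star (x + c • y) ∈ A) : x * a * star y ∈ A := by
  simpa using star_mul_mul_mem_of_forall_smul (A := A) (a := a) (x := star x) (y := star y)
    fun c => by simpa [star_add, star_smul] using h (star c)

end Polarization

section Nondegenerate

variable {B : Type*} [Semigroup B] [TopologicalSpace B] [ContinuousMul B]

lemma mul_mem_of_mem_closure_mul_left {A : Set B} (hA : IsClosed A) {c b : B}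
    (hb : b ∈ closure {x | ∃ a ∈ A, x = a * b}) (h : ∀ a ∈ A, c * a * b ∈ A) : c * b ∈ A :=
  hA.closure_subset <| map_mem_closure (continuous_const_mul c) hb <| by
    rintro _ ⟨a, ha, rfl⟩
    rw [← mul_assoc]
    exact h a ha

lemma mul_mem_of_mem_closure_mul_right {A : Set B} (hA : IsClosed A) {b c : B}
    (hb : b ∈ closure {x | ∃ a ∈ A, x = b * a}) (h : ∀ a ∈ A, b * a * c ∈ A) : b * c ∈ A :=
  hA.closure_subset <| map_mem_closure (f := (· * c)) (continuous_mul_const c) hb <| by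
    rintro _ ⟨a, ha, rfl⟩
    exact h a ha

end Nondegenerate

section Adjoin

variable {R B : Type*} [CommSemiring R] [NonUnitalSemiring B] [Module R B]
  [IsScalarTower R B B] [SMulCommClass R B B]

lemma mul_mem_of_mem_adjoin_singleton {M C : Submodule R B} (hCM : C ≤ M) {x e : B}
    (hx : ∀ m ∈ M, m * x ∈ C) (he : e ∈ NonUnitalAlgebra.adjoin R {x}) :
    ∀ m ∈ M, m * e ∈ C := by
  induction he using NonUnitalAlgebra.adjoin_induction with
  | mem y hy => rwa [Set.mem_singleton_iff.1 hy]
  | add y z _ _ hy hz => exact fun m hm => by rw [mul_add]; exact add_mem (hy m hm) (hz m hm)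
  | zero => simp
  | mul y z _ _ hy hz => exact fun m hm => by rw [← mul_assoc]; exact hz _ (hCM (hy m hm))
  | smul r y _ hy => exact fun m hm => by rw [mul_smul_comm]; exact C.smul_mem r (hy m hm)

lemma mem_of_mem_adjoin_singleton_mul {M C : Submodule R B} (hCM : C ≤ M) {x e : B}
    (hx : ∀ m ∈ M, x * m ∈ C) (he : e ∈ NonUnitalAlgebra.adjoin R {x}) :
    ∀ m ∈ M, e * m ∈ C := by
  induction he using NonUnitalAlgebra.adjoin_induction with
  | mem y hy => rwa [Set.mem_singleton_iff.1 hy]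
  | add y z _ _ hy hz => exact fun m hm => by rw [add_mul]; exact add_mem (hy m hm) (hz m hm)
  | zero => simp
  | mul y z _ _ hy hz => exact fun m hm => by rw [mul_assoc]; exact hy _ (hCM (hz m hm))
  | smul r y _ hy => exact fun m hm => by rw [smul_mul_assoc]; exact C.smul_mem r (hy m hm)

end Adjoin

section Approximation

variable {B : Type*} [NonUnitalCStarAlgebra B]

open NonUnitalStarAlgebra

lemma quasispectrum_star_mul_self_nonneg (b : B) : ∀ t ∈ quasispectrum ℝ (star b * b), 0 ≤ t := by
  intro t ht
  rw [Unitization.quasispectrum_eq_spectrum_inr' ℝ ℂ] at ht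
  exact spectrum_star_mul_self_nonneg (A := Unitization ℂ B) t (by simpa using ht)

lemma star_sub_mul_cfcₙ_mul_sub_mul_cfcₙ (b : B) {f : ℝ → ℝ}
    (hf : ContinuousOn f (quasispectrum ℝ (star b * b))) (hf0 : f 0 = 0) :
    star (b - b * cfcₙ f (star b * b)) * (b - b * cfcₙ f (star b * b)) =
      cfcₙ (fun t => t * (1 - f t) ^ 2) (star b * b) := by
  set x := star b * b
  have hfx : star (cfcₙ f x) = cfcₙ f x := (cfcₙ_predicate f x).star_eq
  calc star (b - b * cfcₙ f x) * (b - b * cfcₙ f x)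
      = x - cfcₙ f x * x - x * cfcₙ f x + cfcₙ f x * x * cfcₙ f x := by
        simp only [star_sub, star_mul, hfx, x]; noncomm_ring
    _ = cfcₙ (fun t => t - f t * t - t * f t + f t * t * f t) x := by
        rw [cfcₙ_add .., cfcₙ_sub .., cfcₙ_sub .., cfcₙ_mul .., cfcₙ_mul .., cfcₙ_mul ..,
          cfcₙ_mul .., cfcₙ_id' ℝ x]
    _ = cfcₙ (fun t => t * (1 - f t) ^ 2) x := cfcₙ_congr fun t _ => by ring

lemma norm_sub_mul_cfcₙ_sq_le (b : B) {f : ℝ → ℝ} {c : ℝ}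
    (hf : ContinuousOn f (quasispectrum ℝ (star b * b))) (hf0 : f 0 = 0)
    (hc : ∀ t ∈ quasispectrum ℝ (star b * b), t * (1 - f t) ^ 2 ≤ c) :
    ‖b - b * cfcₙ f (star b * b)‖ ^ 2 ≤ c := by
  rw [sq, ← CStarRing.norm_star_mul_self, star_sub_mul_cfcₙ_mul_sub_mul_cfcₙ b hf hf0]
  refine norm_cfcₙ_le fun t ht => ?_
  have ht0 := quasispectrum_star_mul_self_nonneg b t ht
  rw [Real.norm_of_nonneg (by positivity)]
  exact hc t ht

lemma mem_closure_mul_elemental_star_mul_self (b : B) :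
    b ∈ closure ((b * ·) '' (elemental ℂ (star b * b) : Set B)) := by
  have hx := quasispectrum_star_mul_self_nonneg b
  have : IsClosed (elemental ℂ (star b * b) : Set B) := elemental.isClosed ℂ _
  rw [Metric.mem_closure_iff]
  intro ε hε
  obtain ⟨δ, hδ, hδε⟩ : ∃ δ, 0 < δ ∧ δ < ε ^ 2 :=
    ⟨ε ^ 2 / 2, by positivity, by linarith [sq_pos_of_pos hε]⟩
  have hf : ContinuousOn (fun t : ℝ => t / (δ + t)) (quasispectrum ℝ (star b * b)) :=
    continuousOn_id.div (continuousOn_const.add continuousOn_id)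
      fun t ht => by have := hx t ht; positivity
  refine ⟨_, ⟨_, cfcₙ_mem (𝕜 := ℝ) (fun t : ℝ => t / (δ + t)) (elemental.self_mem ℂ _), rfl⟩, ?_⟩
  rw [dist_eq_norm, ← sq_lt_sq₀ (norm_nonneg _) hε.le]
  exact (norm_sub_mul_cfcₙ_sq_le b hf (by simp)
    fun t ht => mul_one_sub_div_add_sq_le hδ (hx t ht)).trans_lt hδε

lemma coe_adjoin_singleton_of_isSelfAdjoint {x : B} (hx : IsSelfAdjoint x) :
    (adjoin ℂ {x} : Set B) = NonUnitalAlgebra.adjoin ℂ {x} := by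
  rw [← NonUnitalStarSubalgebra.coe_toNonUnitalSubalgebra, adjoin_toNonUnitalSubalgebra,
    Set.star_singleton, hx.star_eq, Set.union_self]

lemma mem_closure_mul_adjoin_star_mul_self (b : B) :
    b ∈ closure ((b * ·) '' (NonUnitalAlgebra.adjoin ℂ {star b * b} : Set B)) := by
  have h : b ∈ closure ((b * ·) '' closure (adjoin ℂ {star b * b} : Set B)) :=
    mem_closure_mul_elemental_star_mul_self b
  rw [coe_adjoin_singleton_of_isSelfAdjoint (.star_mul_self b)] at h
  exact closure_minimal (image_closure_subset_closure_image (continuous_const_mul b))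
    isClosed_closure h

lemma mem_closure_adjoin_mul_star_mul (b : B) :
    b ∈ closure ((· * b) '' (NonUnitalAlgebra.adjoin ℂ {b * star b} : Set B)) := by
  have h := mem_closure_mul_adjoin_star_mul_self (star b)
  rw [star_star] at h
  have hx : IsSelfAdjoint (b * star b) := by
    simpa only [star_star] using IsSelfAdjoint.star_mul_self (star b)
  have key : star (star b) ∈
      closure ((· * b) '' (NonUnitalAlgebra.adjoin ℂ {b * star b} : Set B)) := by
    refine map_mem_closure continuous_star h ?_
    rintro _ ⟨e, he, rfl⟩
    rw [← coe_adjoin_singleton_of_isSelfAdjoint hx] at he ⊢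
    exact ⟨star e, star_mem he, by simp⟩
  rwa [star_star] at key

end Approximation

theorem subslice_eq_slice_mul_source_general {B : Type*} [NonUnitalCStarAlgebra B]
    (A : NonUnitalStarSubalgebra ℂ B) (hAc : IsClosed (A : Set B))
    (hnd : ∀ b : B, b ∈ closure {x : B | ∃ a ∈ A, x = a * b} ∧
      b ∈ closure {x : B | ∃ a ∈ A, x = b * a})
    (M : Submodule ℂ B)
    (hMnorm : ∀ m ∈ M, ∀ a ∈ A, star m * a * m ∈ A ∧ m * a * star m ∈ A)
    (N : Submodule ℂ B) (hNM : N ≤ M) (hNc : IsClosed (N : Set B))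
    (hAN : ∀ a ∈ A, ∀ n ∈ N, a * n ∈ N)
    (hNA : ∀ n ∈ N, ∀ a ∈ A, n * a ∈ N) :
    (N : Set B) = closure (Submodule.span ℂ
        {x : B | ∃ m ∈ M, ∃ n ∈ N, ∃ n' ∈ N, x = m * (star n * n')} : Set B) ∧
    (N : Set B) = closure (Submodule.span ℂ
        {x : B | ∃ m ∈ M, ∃ n ∈ N, ∃ n' ∈ N, x = (n * star n') * m} : Set B) := by
  have hMsM : ∀ m ∈ M, ∀ m' ∈ M, star m * m' ∈ A := fun m hm m' hm' =>
    mul_mem_of_mem_closure_mul_left hAc (hnd m').1 fun a ha =>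
      star_mul_mul_mem_of_forall_smul fun c => (hMnorm _ (add_mem hm (M.smul_mem c hm')) a ha).1
  have hMMs : ∀ m ∈ M, ∀ m' ∈ M, m * star m' ∈ A := fun m hm m' hm' =>
    mul_mem_of_mem_closure_mul_right hAc (hnd m).2 fun a ha =>
      mul_mul_star_mem_of_forall_smul fun c => (hMnorm _ (add_mem hm (M.smul_mem c hm')) a ha).2
  set S₁ := {x : B | ∃ m ∈ M, ∃ n ∈ N, ∃ n' ∈ N, x = m * (star n * n')}
  set S₂ := {x : B | ∃ m ∈ M, ∃ n ∈ N, ∃ n' ∈ N, x = (n * star n') * m}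
  have hS₁ : Submodule.span ℂ S₁ ≤ N :=
    Submodule.span_le.2 <| by
      rintro _ ⟨m, hm, n, hn, n', hn', rfl⟩
      rw [← mul_assoc]
      exact hAN _ (hMMs m hm n (hNM hn)) n' hn'
  have hS₂ : Submodule.span ℂ S₂ ≤ N :=
    Submodule.span_le.2 <| by
      rintro _ ⟨m, hm, n, hn, n', hn', rfl⟩
      rw [mul_assoc]
      exact hNA n hn _ (hMsM n' (hNM hn') m hm)
  refine ⟨subset_antisymm (fun n hn => ?_) (closure_minimal hS₁ hNc),
    subset_antisymm (fun n hn => ?_) (closure_minimal hS₂ hNc)⟩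
  · refine closure_mono ?_ (mem_closure_mul_adjoin_star_mul_self n)
    rintro _ ⟨e, he, rfl⟩
    exact mul_mem_of_mem_adjoin_singleton (hS₁.trans hNM)
      (fun m hm => Submodule.subset_span ⟨m, hm, n, hn, n, hn, rfl⟩) he n (hNM hn)
  · refine closure_mono ?_ (mem_closure_adjoin_mul_star_mul n)
    rintro _ ⟨e, he, rfl⟩
    exact mem_of_mem_adjoin_singleton_mul (hS₂.trans hNM)
      (fun m hm => Submodule.subset_span ⟨m, hm, n, hn, n, hn, rfl⟩) he n (hNM hn)

/-- For a non-degenerate inclusion `A ⊆ B` of C*-algebras, a slice `M ⊆ B` and a subslice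
`N ⊆ M`, the subslice `N` equals the closed linear span of `{m (n* n') : m ∈ M, n, n' ∈ N}`
and also equals the closed linear span of `{(n n'*) m : m ∈ M, n, n' ∈ N}`; that is,
`N = closure (M · s(N)) = closure (r(N) · M)`. -/
theorem subslice_eq_slice_mul_source {B : Type*} [NonUnitalCStarAlgebra B]
    (A : NonUnitalStarSubalgebra ℂ B) (hAc : IsClosed (A : Set B))
    (hnd : ∀ b : B, b ∈ closure {x : B | ∃ a ∈ A, x = a * b} ∧
      b ∈ closure {x : B | ∃ a ∈ A, x = b * a})
    (M : Submodule ℂ B) (hMc : IsClosed (M : Set B))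
    (hMnorm : ∀ m ∈ M, ∀ a ∈ A, star m * a * m ∈ A ∧ m * a * star m ∈ A)
    (hAM : ∀ a ∈ A, ∀ m ∈ M, a * m ∈ M)
    (hMA : ∀ m ∈ M, ∀ a ∈ A, m * a ∈ M)
    (N : Submodule ℂ B) (hNM : N ≤ M) (hNc : IsClosed (N : Set B))
    (hAN : ∀ a ∈ A, ∀ n ∈ N, a * n ∈ N)
    (hNA : ∀ n ∈ N, ∀ a ∈ A, n * a ∈ N) :
    (N : Set B) = closure (Submodule.span ℂ
        {x : B | ∃ m ∈ M, ∃ n ∈ N, ∃ n' ∈ N, x = m * (star n * n')} : Set B) ∧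
    (N : Set B) = closure (Submodule.span ℂ
        {x : B | ∃ m ∈ M, ∃ n ∈ N, ∃ n' ∈ N, x = (n * star n') * m} : Set B) :=
  subslice_eq_slice_mul_source_general A hAc hnd M hMnorm N hNM hNc hAN hNA
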